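/- For any Weil-algebra A and any m, n ≥ 0, the commutative square in Weil formed by the four maps A ⊗ W^{m+n} → A ⊗ W^m, A ⊗ W^{m+n} → A ⊗ Wⁿ, A ⊗ W^m → A and A ⊗ Wⁿ → A, all induced by the augmentations Wⁿ → ℕ and W^m → ℕ respectively (where W^{m+n} is identified with the Weil-algebra whose first m generators map to the generators of W^m and last n generators map to the generators of Wⁿ), is a pullback square in the category Weil. -/

import Mathlib

open MvPolynomial

/-- A presentation of a Weil-algebra: a finite set of generators together with a
reflexive symmetric relation `sim`; the algebra is `ℕ[xᵢ]/(xᵢxⱼ : sim i j)`. -/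
structure WeilPres where
  ι : Type
  fintypeI : Fintype ι
  sim : ι → ι → Prop
  refl : ∀ i, sim i i
  symm : ∀ i j, sim i j → sim j i

attribute [instance] WeilPres.fintypeI

/-- The underlying commutative semiring `ℕ[x₁,…,xₙ]/(xᵢxⱼ : i ∼ j)` of a Weil presentation. -/
def WeilPres.Carrier (P : WeilPres) : Type :=
  (ringConGen fun p q : MvPolynomial P.ι ℕ =>
    ∃ i j, P.sim i j ∧ p = X i * X j ∧ q = 0).Quotient

noncomputable instance (P : WeilPres) : CommSemiring P.Carrier :=
  inferInstanceAs (CommSemiring (RingCon.Quotient _))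

/-- The generator `xᵢ` of the Weil-algebra presented by `P`. -/
noncomputable def WeilPres.gen (P : WeilPres) (i : P.ι) : P.Carrier :=
  RingCon.mk' _ (X i)

/-- Tensor product (coproduct) of Weil presentations: concatenation of generators. -/
def WeilPres.tensor (P Q : WeilPres) : WeilPres where
  ι := P.ι ⊕ Q.ι
  fintypeI := inferInstance
  sim := Sum.LiftRel P.sim Q.sim
  refl i := by cases i with
    | inl a => exact Sum.LiftRel.inl (P.refl a)
    | inr a => exact Sum.LiftRel.inr (Q.refl a)
  symm i j h := by cases h with
    | inl h => exact Sum.LiftRel.inl (P.symm _ _ h)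
    | inr h => exact Sum.LiftRel.inr (Q.symm _ _ h)

/-- `Wⁿ = ℕ[x₁,…,xₙ]/(xᵢxⱼ)`: all pairwise products of generators vanish. -/
def WnPres (n : ℕ) : WeilPres where
  ι := Fin n
  fintypeI := inferInstance
  sim _ _ := True
  refl _ := trivial
  symm _ _ _ := trivial

/-- `ℕ` itself, as the Weil-algebra with no generators. -/
def NPres : WeilPres where
  ι := Empty
  fintypeI := inferInstance
  sim _ _ := True
  refl _ := trivial
  symm _ _ _ := trivial

/-!
The generators `yᵦ` of `Wᵏ` multiply to zero, so `A ⊗ Wᵏ` is the trivial square-zero extension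
`A ⊕ Aᵏ`, via `xᵢ ↦ (xᵢ, 0)` and `yᵦ ↦ (0, eᵦ)`. In this model the augmentation maps restrict the
`Aᵏ`-component to a block of coordinates and `A ⊗ Wᵏ → A` is the first projection, so the square
is already a pullback of sets: `(a, v)` and `(a, w)` glue uniquely to `(a, Fin.append v w)`.
A square of ring homomorphisms that is a pullback of sets is a pullback of rings.
-/

theorem RingHom.existsUnique_pullback_lift {R S₁ S₂ T Q : Type*} [Semiring R] [Semiring S₁]
    [Semiring S₂] [Semiring T] [Semiring Q] (f₁ : R →+* S₁) (f₂ : R →+* S₂) (g₁ : S₁ →+* T)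
    (g₂ : S₂ →+* T) (hinj : ∀ r r', f₁ r = f₁ r' → f₂ r = f₂ r' → r = r')
    (hsurj : ∀ s₁ s₂, g₁ s₁ = g₂ s₂ → ∃ r, f₁ r = s₁ ∧ f₂ r = s₂)
    (u : Q →+* S₁) (v : Q →+* S₂) (huv : g₁.comp u = g₂.comp v) :
    ∃! w : Q →+* R, f₁.comp w = u ∧ f₂.comp w = v := by
  choose w hw₁ hw₂ using fun q => hsurj (u q) (v q) (RingHom.congr_fun huv q)
  refine ⟨{ toFun := w
            map_one' := hinj _ _ (by simp [hw₁]) (by simp [hw₂])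
            map_mul' := fun x y => hinj _ _ (by simp [hw₁]) (by simp [hw₂])
            map_zero' := hinj _ _ (by simp [hw₁]) (by simp [hw₂])
            map_add' := fun x y => hinj _ _ (by simp [hw₁]) (by simp [hw₂]) },
    ⟨RingHom.ext hw₁, RingHom.ext hw₂⟩, fun w' ⟨h₁, h₂⟩ => RingHom.ext fun q => ?_⟩
  exact hinj _ _ (by simp [← h₁, hw₁]) (by simp [← h₂, hw₂])

namespace TrivSqZeroExt

variable {R : Type*} [CommSemiring R] {m n : ℕ}

theorem eq_of_map_funLeft_castAdd_eq_of_map_funLeft_natAdd_eq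
    {z z' : TrivSqZeroExt R (Fin (m + n) → R)}
    (h₁ : map (LinearMap.funLeft R R (Fin.castAdd n)) z =
      map (LinearMap.funLeft R R (Fin.castAdd n)) z')
    (h₂ : map (LinearMap.funLeft R R (Fin.natAdd m)) z =
      map (LinearMap.funLeft R R (Fin.natAdd m)) z') : z = z' := by
  refine ext (by simpa using congrArg fst h₁) (funext fun i => ?_)
  induction i using Fin.addCases with
  | left b => simpa using congrFun (congrArg snd h₁) b
  | right b => simpa using congrFun (congrArg snd h₂) b

theorem exists_map_funLeft_castAdd_eq_and_map_funLeft_natAdd_eq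
    (x : TrivSqZeroExt R (Fin m → R)) (y : TrivSqZeroExt R (Fin n → R)) (h : x.fst = y.fst) :
    ∃ z : TrivSqZeroExt R (Fin (m + n) → R),
      map (LinearMap.funLeft R R (Fin.castAdd n)) z = x ∧
      map (LinearMap.funLeft R R (Fin.natAdd m)) z = y := by
  refine ⟨inl x.fst + inr (Fin.append x.snd y.snd), ?_, ?_⟩ <;> ext <;>
    simp [h, LinearMap.funLeft_apply]

end TrivSqZeroExt

namespace WeilPres

variable (P : WeilPres)

theorem gen_mul_gen {i j : P.ι} (h : P.sim i j) : P.gen i * P.gen j = 0 := by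
  refine (map_mul (RingCon.mk' _) (X i) (X j)).symm.trans ?_
  exact (RingCon.eq _).2 (RingConGen.Rel.of _ _ ⟨i, j, h, rfl, rfl⟩)

variable {P}

theorem hom_ext {S : Type*} [Semiring S] {f g : P.Carrier →+* S}
    (h : ∀ i, f (P.gen i) = g (P.gen i)) : f = g :=
  RingCon.Quotient.hom_ext <| MvPolynomial.ringHom_ext (fun r => by simp) h

noncomputable def lift {S : Type*} [CommSemiring S] (e : P.ι → S)
    (he : ∀ i j, P.sim i j → e i * e j = 0) : P.Carrier →+* S :=
  RingCon.lift _ (eval₂Hom (Nat.castRingHom S) e) <| RingCon.ringConGen_le.2 <| by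
    rintro _ _ ⟨i, j, h, rfl, rfl⟩
    simp [RingCon.ker_apply, he i j h]

@[simp]
theorem lift_gen {S : Type*} [CommSemiring S] (e : P.ι → S)
    (he : ∀ i j, P.sim i j → e i * e j = 0) (i : P.ι) : P.lift e he (P.gen i) = e i :=
  eval₂Hom_X' _ _ i

variable (P) in
noncomputable def tensorInl (Q : WeilPres) : P.Carrier →+* (P.tensor Q).Carrier :=
  P.lift (fun a => (P.tensor Q).gen (.inl a)) fun _ _ h => gen_mul_gen _ (.inl h)

@[simp]
theorem tensorInl_gen (Q : WeilPres) (a : P.ι) :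
    P.tensorInl Q (P.gen a) = (P.tensor Q).gen (.inl a) :=
  lift_gen _ _ a

open TrivSqZeroExt

variable (P) (k : ℕ)

noncomputable def toTrivSqZeroExt :
    (P.tensor (WnPres k)).Carrier →+* TrivSqZeroExt P.Carrier (Fin k → P.Carrier) :=
  (P.tensor (WnPres k)).lift
      (Sum.elim (fun a => inl (P.gen a)) fun b => inr (Pi.single b 1)) <| by
    rintro _ _ (h | h)
    · rw [Sum.elim_inl, Sum.elim_inl, ← inl_mul, P.gen_mul_gen h, inl_zero]
    · exact inr_mul_inr _ _ _

@[simp]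
theorem toTrivSqZeroExt_gen_inl (a : P.ι) :
    P.toTrivSqZeroExt k ((P.tensor (WnPres k)).gen (.inl a)) = inl (P.gen a) :=
  lift_gen _ _ _

@[simp]
theorem toTrivSqZeroExt_gen_inr (b : Fin k) :
    P.toTrivSqZeroExt k ((P.tensor (WnPres k)).gen (.inr b)) = inr (Pi.single b 1) :=
  lift_gen _ _ _

theorem toTrivSqZeroExt_tensorInl (a : P.Carrier) :
    P.toTrivSqZeroExt k (P.tensorInl _ a) = inl a := by
  have : (P.toTrivSqZeroExt k).comp (P.tensorInl _) = inlHom _ _ := hom_ext fun a => by simp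
  exact RingHom.congr_fun this a

theorem tensorWn_gen_inr_mul_gen_inr (b b' : Fin k) :
    (P.tensor (WnPres k)).gen (.inr b) * (P.tensor (WnPres k)).gen (.inr b') = 0 :=
  gen_mul_gen _ (Sum.LiftRel.inr trivial)

noncomputable def sumMulGen : (Fin k → P.Carrier) →ₗ[ℕ] (P.tensor (WnPres k)).Carrier where
  toFun v := ∑ b, P.tensorInl _ (v b) * (P.tensor (WnPres k)).gen (.inr b)
  map_add' v w := by simp [add_mul, Finset.sum_add_distrib]
  map_smul' c v := by simp [Finset.smul_sum, mul_assoc]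

theorem sumMulGen_mul_sumMulGen (v w : Fin k → P.Carrier) :
    P.sumMulGen k v * P.sumMulGen k w = 0 := by
  rw [sumMulGen, LinearMap.coe_mk, AddHom.coe_mk, Finset.sum_mul_sum]
  refine Finset.sum_eq_zero fun b _ => Finset.sum_eq_zero fun b' _ => ?_
  rw [mul_mul_mul_comm, tensorWn_gen_inr_mul_gen_inr, mul_zero]

noncomputable def ofTrivSqZeroExt :
    TrivSqZeroExt P.Carrier (Fin k → P.Carrier) →+* (P.tensor (WnPres k)).Carrier :=
  (TrivSqZeroExt.lift (P.tensorInl _).toNatAlgHom (P.sumMulGen k) (P.sumMulGen_mul_sumMulGen k)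
    (fun r v => by simp [sumMulGen, Finset.mul_sum, mul_assoc])
    (fun r v => by
      simp only [sumMulGen, LinearMap.coe_mk, AddHom.coe_mk, Finset.sum_mul]
      refine Finset.sum_congr rfl fun b _ => ?_
      simp [mul_right_comm])).toRingHom

theorem ofTrivSqZeroExt_apply (x : TrivSqZeroExt P.Carrier (Fin k → P.Carrier)) :
    P.ofTrivSqZeroExt k x = P.tensorInl _ x.fst + P.sumMulGen k x.snd :=
  rfl

theorem toTrivSqZeroExt_ofTrivSqZeroExt (x : TrivSqZeroExt P.Carrier (Fin k → P.Carrier)) :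
    P.toTrivSqZeroExt k (P.ofTrivSqZeroExt k x) = x := by
  rw [ofTrivSqZeroExt_apply, map_add, toTrivSqZeroExt_tensorInl, sumMulGen, LinearMap.coe_mk,
    AddHom.coe_mk, map_sum]
  simp only [map_mul, toTrivSqZeroExt_tensorInl, toTrivSqZeroExt_gen_inr, inl_mul_inr,
    ← Pi.single_smul', smul_eq_mul, mul_one, ← inr_sum, Finset.univ_sum_single,
    inl_fst_add_inr_snd_eq]

theorem ofTrivSqZeroExt_comp_toTrivSqZeroExt :
    (P.ofTrivSqZeroExt k).comp (P.toTrivSqZeroExt k) = RingHom.id _ :=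
  hom_ext <| by
    rintro (a | (b : Fin k))
    · simp [ofTrivSqZeroExt_apply]
    · simp [ofTrivSqZeroExt_apply, sumMulGen, Pi.single_apply]

noncomputable def tensorWnEquiv :
    (P.tensor (WnPres k)).Carrier ≃+* TrivSqZeroExt P.Carrier (Fin k → P.Carrier) :=
  RingEquiv.ofRingHom (P.toTrivSqZeroExt k) (P.ofTrivSqZeroExt k)
    (RingHom.ext (P.toTrivSqZeroExt_ofTrivSqZeroExt k)) (P.ofTrivSqZeroExt_comp_toTrivSqZeroExt k)

@[simp]
theorem tensorWnEquiv_gen_inl (a : P.ι) :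
    P.tensorWnEquiv k ((P.tensor (WnPres k)).gen (.inl a)) = inl (P.gen a) :=
  P.toTrivSqZeroExt_gen_inl k a

@[simp]
theorem tensorWnEquiv_gen_inr (b : Fin k) :
    P.tensorWnEquiv k ((P.tensor (WnPres k)).gen (.inr b)) = inr (Pi.single b 1) :=
  P.toTrivSqZeroExt_gen_inr k b

variable {P k}

theorem eq_fst_tensorWnEquiv (g : (P.tensor (WnPres k)).Carrier →+* P.Carrier)
    (hA : ∀ a, g ((P.tensor (WnPres k)).gen (.inl a)) = P.gen a)
    (hW : ∀ b : Fin k, g ((P.tensor (WnPres k)).gen (.inr b)) = 0)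
    (x : (P.tensor (WnPres k)).Carrier) : g x = (P.tensorWnEquiv k x).fst := by
  refine RingHom.congr_fun (g := (fstHom ℕ _ _).toRingHom.comp (P.tensorWnEquiv k).toRingHom)
    (hom_ext ?_) x
  rintro (a | (b : Fin k)) <;> simp [hA, hW]

theorem tensorWnEquiv_map_funLeft {l : ℕ} (σ : Fin l → Fin k)
    (f : (P.tensor (WnPres k)).Carrier →+* (P.tensor (WnPres l)).Carrier)
    (hA : ∀ a, f ((P.tensor (WnPres k)).gen (.inl a)) = (P.tensor (WnPres l)).gen (.inl a))
    (hW : ∀ i : Fin k, P.tensorWnEquiv l (f ((P.tensor (WnPres k)).gen (.inr i))) =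
      map (LinearMap.funLeft P.Carrier P.Carrier σ)
        (P.tensorWnEquiv k ((P.tensor (WnPres k)).gen (.inr i))))
    (x : (P.tensor (WnPres k)).Carrier) :
    P.tensorWnEquiv l (f x) =
      map (LinearMap.funLeft P.Carrier P.Carrier σ) (P.tensorWnEquiv k x) := by
  refine RingHom.congr_fun (f := (P.tensorWnEquiv l).toRingHom.comp f)
    (g := (map (LinearMap.funLeft P.Carrier P.Carrier σ)).toRingHom.comp
      (P.tensorWnEquiv k).toRingHom) (hom_ext ?_) x
  rintro (a | (i : Fin k))
  · simp [hA]
  · exact hW i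

variable {m n : ℕ}

theorem tensorWnEquiv_map_funLeft_castAdd
    (f : (P.tensor (WnPres (m + n))).Carrier →+* (P.tensor (WnPres m)).Carrier)
    (hA : ∀ a, f ((P.tensor (WnPres (m + n))).gen (.inl a)) = (P.tensor (WnPres m)).gen (.inl a))
    (hm : ∀ b : Fin m, f ((P.tensor (WnPres (m + n))).gen (.inr (Fin.castAdd n b))) =
      (P.tensor (WnPres m)).gen (.inr b))
    (hn : ∀ b : Fin n, f ((P.tensor (WnPres (m + n))).gen (.inr (Fin.natAdd m b))) = 0)
    (x : (P.tensor (WnPres (m + n))).Carrier) :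
    P.tensorWnEquiv m (f x) =
      map (LinearMap.funLeft P.Carrier P.Carrier (Fin.castAdd n)) (P.tensorWnEquiv (m + n) x) := by
  refine tensorWnEquiv_map_funLeft _ f hA (fun i => ?_) x
  induction i using Fin.addCases with
  | left b =>
    simp only [hm, tensorWnEquiv_gen_inr, map_inr]
    congr 1
    ext b'
    simp [LinearMap.funLeft_apply, Pi.single_apply]
  | right b =>
    simp only [hn, map_zero, tensorWnEquiv_gen_inr, map_inr, ← inr_zero]
    congr 1
    ext b'
    simp [LinearMap.funLeft_apply, Pi.single_apply, Fin.ext_iff]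
    omega

theorem tensorWnEquiv_map_funLeft_natAdd
    (f : (P.tensor (WnPres (m + n))).Carrier →+* (P.tensor (WnPres n)).Carrier)
    (hA : ∀ a, f ((P.tensor (WnPres (m + n))).gen (.inl a)) = (P.tensor (WnPres n)).gen (.inl a))
    (hm : ∀ b : Fin m, f ((P.tensor (WnPres (m + n))).gen (.inr (Fin.castAdd n b))) = 0)
    (hn : ∀ b : Fin n, f ((P.tensor (WnPres (m + n))).gen (.inr (Fin.natAdd m b))) =
      (P.tensor (WnPres n)).gen (.inr b))
    (x : (P.tensor (WnPres (m + n))).Carrier) :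
    P.tensorWnEquiv n (f x) =
      map (LinearMap.funLeft P.Carrier P.Carrier (Fin.natAdd m)) (P.tensorWnEquiv (m + n) x) := by
  refine tensorWnEquiv_map_funLeft _ f hA (fun i => ?_) x
  induction i using Fin.addCases with
  | left b =>
    simp only [hm, map_zero, tensorWnEquiv_gen_inr, map_inr, ← inr_zero]
    congr 1
    ext b'
    simp [LinearMap.funLeft_apply, Pi.single_apply, Fin.ext_iff]
    omega
  | right b =>
    simp only [hn, tensorWnEquiv_gen_inr, map_inr]
    congr 1
    ext b'
    simp [LinearMap.funLeft_apply, Pi.single_apply]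

end WeilPres

/-- The foundational squares: for any Weil-algebra `A` and `m, n ≥ 0`, the square
`A ⊗ W^{m+n} → A ⊗ W^m, A ⊗ Wⁿ → A` (all maps induced by the augmentations of `Wⁿ`
resp. `W^m`) is a pullback in the category `Weil`. -/
theorem foundational_pullback (P : WeilPres) (m n : ℕ)
    (f₁ : (P.tensor (WnPres (m + n))).Carrier →+* (P.tensor (WnPres m)).Carrier)
    (f₂ : (P.tensor (WnPres (m + n))).Carrier →+* (P.tensor (WnPres n)).Carrier)
    (g₁ : (P.tensor (WnPres m)).Carrier →+* P.Carrier)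
    (g₂ : (P.tensor (WnPres n)).Carrier →+* P.Carrier)
    (hf₁A : ∀ a : P.ι, f₁ ((P.tensor (WnPres (m + n))).gen (Sum.inl a)) =
      (P.tensor (WnPres m)).gen (Sum.inl a))
    (hf₁m : ∀ b : Fin m, f₁ ((P.tensor (WnPres (m + n))).gen (Sum.inr (Fin.castAdd n b))) =
      (P.tensor (WnPres m)).gen (Sum.inr b))
    (hf₁n : ∀ b : Fin n, f₁ ((P.tensor (WnPres (m + n))).gen (Sum.inr (Fin.natAdd m b))) = 0)
    (hf₂A : ∀ a : P.ι, f₂ ((P.tensor (WnPres (m + n))).gen (Sum.inl a)) =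
      (P.tensor (WnPres n)).gen (Sum.inl a))
    (hf₂m : ∀ b : Fin m, f₂ ((P.tensor (WnPres (m + n))).gen (Sum.inr (Fin.castAdd n b))) = 0)
    (hf₂n : ∀ b : Fin n, f₂ ((P.tensor (WnPres (m + n))).gen (Sum.inr (Fin.natAdd m b))) =
      (P.tensor (WnPres n)).gen (Sum.inr b))
    (hg₁A : ∀ a : P.ι, g₁ ((P.tensor (WnPres m)).gen (Sum.inl a)) = P.gen a)
    (hg₁m : ∀ b : Fin m, g₁ ((P.tensor (WnPres m)).gen (Sum.inr b)) = 0)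
    (hg₂A : ∀ a : P.ι, g₂ ((P.tensor (WnPres n)).gen (Sum.inl a)) = P.gen a)
    (hg₂n : ∀ b : Fin n, g₂ ((P.tensor (WnPres n)).gen (Sum.inr b)) = 0) :
    g₁.comp f₁ = g₂.comp f₂ ∧
    ∀ (Q : WeilPres) (u : Q.Carrier →+* (P.tensor (WnPres m)).Carrier)
      (v : Q.Carrier →+* (P.tensor (WnPres n)).Carrier),
      g₁.comp u = g₂.comp v →
      ∃! w : Q.Carrier →+* (P.tensor (WnPres (m + n))).Carrier,
        f₁.comp w = u ∧ f₂.comp w = v := by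
  have hg₁ := WeilPres.eq_fst_tensorWnEquiv g₁ hg₁A hg₁m
  have hg₂ := WeilPres.eq_fst_tensorWnEquiv g₂ hg₂A hg₂n
  have hf₁ := WeilPres.tensorWnEquiv_map_funLeft_castAdd f₁ hf₁A hf₁m hf₁n
  have hf₂ := WeilPres.tensorWnEquiv_map_funLeft_natAdd f₂ hf₂A hf₂m hf₂n
  refine ⟨RingHom.ext fun r => by simp [hg₁, hg₂, hf₁, hf₂], fun Q u v huv =>
    RingHom.existsUnique_pullback_lift f₁ f₂ g₁ g₂ (fun r r' h₁ h₂ => ?_) (fun s t h => ?_) u v huv⟩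
  · refine (P.tensorWnEquiv (m + n)).injective
      (TrivSqZeroExt.eq_of_map_funLeft_castAdd_eq_of_map_funLeft_natAdd_eq ?_ ?_)
    · rw [← hf₁, ← hf₁, h₁]
    · rw [← hf₂, ← hf₂, h₂]
  · obtain ⟨z, hz₁, hz₂⟩ := TrivSqZeroExt.exists_map_funLeft_castAdd_eq_and_map_funLeft_natAdd_eq
      (P.tensorWnEquiv m s) (P.tensorWnEquiv n t) (by rw [← hg₁, ← hg₂, h])
    refine ⟨(P.tensorWnEquiv (m + n)).symm z, (P.tensorWnEquiv m).injective ?_,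
      (P.tensorWnEquiv n).injective ?_⟩
    · rw [hf₁, RingEquiv.apply_symm_apply, hz₁]
    · rw [hf₂, RingEquiv.apply_symm_apply, hz₂]
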